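/- arXiv:0908.0027 — 4 statements merged into one kernel-verified Lean document; each statement's English description precedes it below -/
import Mathlib

section
/- Let f_0, …, f_k be bounded dynamically Hölder functions with common constants K and θ ∈ (0,1) and common sup norm bound ‖f_i‖_∞ ≤ N, and let 0 ≤ i_0 < i_1 < ⋯ < i_k be integers. Then the product f̃ = (f_0 ∘ F^{i_0}) ⋯ (f_k ∘ F^{i_k}) is dynamically Hölder with exponent θ and constant K · N^k · θ^{i_0} / (1 − θ). -/
lemma prod_diff_norm_le {a b : ℕ → ℂ} {N : ℝ} (hN : 0 ≤ N) :
    ∀ n : ℕ, (∀ j ≤ n, ‖a j‖ ≤ N) → (∀ j ≤ n, ‖b j‖ ≤ N) →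
    ‖∏ j ∈ Finset.range (n+1), a j - ∏ j ∈ Finset.range (n+1), b j‖ ≤
      ∑ j ∈ Finset.range (n+1), N ^ n * ‖a j - b j‖ := by
  intro n
  induction n with
  | zero =>
      intro _ _
      simp
  | succ n ih =>
      intro ha hb
      have ha' : ∀ j ≤ n, ‖a j‖ ≤ N := fun j hj => ha j (hj.trans (Nat.le_succ n))
      have hb' : ∀ j ≤ n, ‖b j‖ ≤ N := fun j hj => hb j (hj.trans (Nat.le_succ n))
      have hIH := ih ha' hb'
      have hprodA : ‖∏ j ∈ Finset.range (n+1), a j‖ ≤ N ^ (n+1) := by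
        rw [norm_prod]
        calc ∏ j ∈ Finset.range (n+1), ‖a j‖
            ≤ ∏ j ∈ Finset.range (n+1), N := by
              apply Finset.prod_le_prod (fun j _ => norm_nonneg _)
              intro j hj
              exact (ha j (Nat.lt_succ_iff.mp (Finset.mem_range.mp hj) |>.trans (Nat.le_succ n)))
          _ = N ^ (n+1) := by simp
      have key : ∏ j ∈ Finset.range (n+2), a j - ∏ j ∈ Finset.range (n+2), b j
          = (∏ j ∈ Finset.range (n+1), a j) * (a (n+1) - b (n+1))
            + (∏ j ∈ Finset.range (n+1), a j - ∏ j ∈ Finset.range (n+1), b j) * b (n+1) := by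
        rw [Finset.prod_range_succ a (n+1), Finset.prod_range_succ b (n+1)]; ring
      rw [key, Finset.sum_range_succ]
      calc ‖(∏ j ∈ Finset.range (n+1), a j) * (a (n+1) - b (n+1))
            + (∏ j ∈ Finset.range (n+1), a j - ∏ j ∈ Finset.range (n+1), b j) * b (n+1)‖
          ≤ ‖(∏ j ∈ Finset.range (n+1), a j) * (a (n+1) - b (n+1))‖
            + ‖(∏ j ∈ Finset.range (n+1), a j - ∏ j ∈ Finset.range (n+1), b j) * b (n+1)‖ :=
            norm_add_le _ _
        _ = ‖∏ j ∈ Finset.range (n+1), a j‖ * ‖a (n+1) - b (n+1)‖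
            + ‖∏ j ∈ Finset.range (n+1), a j - ∏ j ∈ Finset.range (n+1), b j‖ * ‖b (n+1)‖ := by
            rw [norm_mul, norm_mul]
        _ ≤ N ^ (n+1) * ‖a (n+1) - b (n+1)‖
            + (∑ j ∈ Finset.range (n+1), N ^ n * ‖a j - b j‖) * N := by
            gcongr
            exact hb (n+1) le_rfl
        _ = (∑ j ∈ Finset.range (n+1), N ^ (n+1) * ‖a j - b j‖)
            + N ^ (n+1) * ‖a (n+1) - b (n+1)‖ := by
            rw [Finset.sum_mul, add_comm]
            congr 1
            apply Finset.sum_congr rfl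
            intro j _
            ring

/-- a product `f̃ = (f_0 ∘ F^{i_0}) ⋯ (f_k ∘ F^{i_k})` of bounded
dynamically Hölder functions with common constants `(K, θ)` and common sup-norm
bound `N` is dynamically Hölder with exponent `θ` and constant
`K * N^k * θ^{i_0} / (1 - θ)`. -/
theorem product_iterates_dynamically_holder
    {M : Type*} (F : M → M) (s : M → M → ℕ) (𝒲 : Set (Set M))
    (hF𝒲 : ∀ W ∈ 𝒲, F '' W ∈ 𝒲)
    (hs : ∀ W ∈ 𝒲, ∀ x ∈ W, ∀ y ∈ W, s (F x) (F y) = 1 + s x y)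
    (k : ℕ) (f : ℕ → M → ℂ) (i : ℕ → ℕ) (hi : StrictMonoOn i (Set.Iic k))
    (K θ N : ℝ) (hK : 0 ≤ K) (hθ : θ ∈ Set.Ioo (0:ℝ) 1) (hN : 0 ≤ N)
    (hbdd : ∀ j ≤ k, ∀ x, ‖f j x‖ ≤ N)
    (hf : ∀ j ≤ k, ∀ W ∈ 𝒲, ∀ x ∈ W, ∀ y ∈ W, ‖f j x - f j y‖ ≤ K * θ ^ s x y) :
    ∀ W ∈ 𝒲, ∀ x ∈ W, ∀ y ∈ W,
      ‖(∏ j ∈ Finset.range (k + 1), f j (F^[i j] x)) -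
        ∏ j ∈ Finset.range (k + 1), f j (F^[i j] y)‖ ≤
      K * N ^ k * θ ^ i 0 / (1 - θ) * θ ^ s x y := by
  intro W hW x hx y hy
  obtain ⟨hθ0, hθ1⟩ := hθ
  -- iterates stay on admissible manifolds with shifted separation time
  have iter : ∀ m : ℕ, ∃ W' ∈ 𝒲, F^[m] x ∈ W' ∧ F^[m] y ∈ W' ∧
      s (F^[m] x) (F^[m] y) = m + s x y := by
    intro m
    induction m with
    | zero => exact ⟨W, hW, hx, hy, by simp⟩
    | succ m ih =>
        obtain ⟨W', hW', hxm, hym, hsm⟩ := ih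
        refine ⟨F '' W', hF𝒲 W' hW', ?_, ?_, ?_⟩
        · rw [Function.iterate_succ_apply']; exact ⟨_, hxm, rfl⟩
        · rw [Function.iterate_succ_apply']; exact ⟨_, hym, rfl⟩
        · rw [Function.iterate_succ_apply', Function.iterate_succ_apply',
            hs W' hW' _ hxm _ hym, hsm]
          ring
  -- growth of the indices
  have hij : ∀ j ≤ k, i 0 + j ≤ i j := by
    intro j
    induction j with
    | zero => intro _; simp
    | succ j ihj =>
        intro hj
        have h2 : i j < i (j+1) :=
          hi (Set.mem_Iic.mpr (by omega)) (Set.mem_Iic.mpr hj) (Nat.lt_succ_self j)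
        have h3 := ihj (by omega)
        omega
  -- pointwise Hölder estimate for each factor
  have hfac : ∀ j ≤ k, ‖f j (F^[i j] x) - f j (F^[i j] y)‖ ≤
      K * (θ ^ i 0 * θ ^ j * θ ^ s x y) := by
    intro j hj
    obtain ⟨W', hW', hxm, hym, hsm⟩ := iter (i j)
    have h1 := hf j hj W' hW' _ hxm _ hym
    rw [hsm] at h1
    refine h1.trans ?_
    have hij' := hij j hj
    have hpow : θ ^ (i j + s x y) ≤ θ ^ (i 0 + j + s x y) := by
      apply pow_le_pow_of_le_one hθ0.le hθ1.le
      omega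
    calc K * θ ^ (i j + s x y) ≤ K * θ ^ (i 0 + j + s x y) := by gcongr
      _ = K * (θ ^ i 0 * θ ^ j * θ ^ s x y) := by rw [pow_add, pow_add]
  -- bounds on the factors
  have hax : ∀ j ≤ k, ‖f j (F^[i j] x)‖ ≤ N := fun j hj => hbdd j hj _
  have hay : ∀ j ≤ k, ‖f j (F^[i j] y)‖ ≤ N := fun j hj => hbdd j hj _
  have main := prod_diff_norm_le (a := fun j => f j (F^[i j] x))
    (b := fun j => f j (F^[i j] y)) hN k hax hay
  refine main.trans ?_
  have step2 : ∑ j ∈ Finset.range (k+1),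
      N ^ k * ‖f j (F^[i j] x) - f j (F^[i j] y)‖ ≤
      ∑ j ∈ Finset.range (k+1), N ^ k * (K * (θ ^ i 0 * θ ^ j * θ ^ s x y)) := by
    apply Finset.sum_le_sum
    intro j hj
    have := hfac j (Nat.lt_succ_iff.mp (Finset.mem_range.mp hj))
    gcongr
  refine step2.trans ?_
  have hgeom : ∑ j ∈ Finset.range (k+1), θ ^ j ≤ 1 / (1 - θ) := by
    rw [geom_sum_eq hθ1.ne]
    have h2 : (θ ^ (k+1) - 1) / (θ - 1) = (1 - θ ^ (k+1)) / (1 - θ) := by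
      rw [← neg_div_neg_eq]; ring_nf
    rw [h2]
    gcongr
    · have : (0:ℝ) ≤ θ ^ (k+1) := by positivity
      linarith
  have hrw : ∑ j ∈ Finset.range (k+1), N ^ k * (K * (θ ^ i 0 * θ ^ j * θ ^ s x y))
      = (N ^ k * K * θ ^ i 0 * θ ^ s x y) * ∑ j ∈ Finset.range (k+1), θ ^ j := by
    rw [Finset.mul_sum]
    apply Finset.sum_congr rfl
    intro j _
    ring
  rw [hrw]
  calc (N ^ k * K * θ ^ i 0 * θ ^ s x y) * ∑ j ∈ Finset.range (k+1), θ ^ j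
      ≤ (N ^ k * K * θ ^ i 0 * θ ^ s x y) * (1 / (1 - θ)) := by
        gcongr
    _ = K * N ^ k * θ ^ i 0 / (1 - θ) * θ ^ s x y := by
        field_simp
end

section
/- Let (X, d) be a metric space, g_0, …, g_k : X → ℂ bounded functions, T : X → X a map with d(T x, T y) ≤ ν d(x, y) for some ν ∈ (0,1), and suppose each g_l is β-Hölder: |g_l(x) − g_l(y)| ≤ H_l d(x,y)^β for d(x,y) ≤ δ. Then the product g̃ = g_0 · (g_1 ∘ T) ⋯ (g_k ∘ T^k) satisfies |g̃(x) − g̃(y)| ≤ (Π_i ‖g_i‖_∞ / min_i ‖g_i‖_∞) · (max_l H_l / (1 − ν^β)) · d(x,y)^β for all x, y with d(x,y) ≤ δ, provided min_i ‖g_i‖_∞ > 0. -/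
open Finset

private lemma norm_prod_sub_prod_le_aux (n : ℕ) (a b : ℕ → ℂ) (M : ℕ → ℝ)
    (ha : ∀ i, ‖a i‖ ≤ M i) (hb : ∀ i, ‖b i‖ ≤ M i) :
    ‖∏ l ∈ range n, a l - ∏ l ∈ range n, b l‖ ≤
      ∑ l ∈ range n, (∏ i ∈ (range n).erase l, M i) * ‖a l - b l‖ := by
  have hM : ∀ i, 0 ≤ M i := fun i => (norm_nonneg _).trans (ha i)
  induction n with
  | zero => simp
  | succ n ih =>
    have h1 : ∑ l ∈ range (n+1), (∏ i ∈ (range (n+1)).erase l, M i) * ‖a l - b l‖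
        = (∑ l ∈ range n, (∏ i ∈ (range n).erase l, M i) * ‖a l - b l‖) * M n
          + (∏ i ∈ range n, M i) * ‖a n - b n‖ := by
      rw [sum_range_succ, sum_mul]
      congr 1
      · refine Finset.sum_congr rfl fun l hl => ?_
        have hln : l ≠ n := Nat.ne_of_lt (mem_range.mp hl)
        have h2 : (range (n+1)).erase l = insert n ((range n).erase l) := by
          rw [range_add_one]
          exact Finset.erase_insert_of_ne hln.symm
        rw [h2, Finset.prod_insert (by simp)]
        ring
      · rw [range_add_one, Finset.erase_insert (by simp)]
    rw [h1, prod_range_succ, prod_range_succ]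
    have key : (∏ l ∈ range n, a l) * a n - (∏ l ∈ range n, b l) * b n
        = ((∏ l ∈ range n, a l) - ∏ l ∈ range n, b l) * a n
          + (∏ l ∈ range n, b l) * (a n - b n) := by ring
    rw [key]
    have hbn : ‖∏ l ∈ range n, b l‖ ≤ ∏ i ∈ range n, M i := by
      rw [norm_prod]
      exact Finset.prod_le_prod (fun i _ => norm_nonneg _) (fun i _ => hb i)
    calc ‖((∏ l ∈ range n, a l) - ∏ l ∈ range n, b l) * a n
          + (∏ l ∈ range n, b l) * (a n - b n)‖
        ≤ ‖(∏ l ∈ range n, a l) - ∏ l ∈ range n, b l‖ * ‖a n‖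
          + ‖∏ l ∈ range n, b l‖ * ‖a n - b n‖ := by
          refine (norm_add_le _ _).trans ?_
          simp [norm_mul, le_refl]
      _ ≤ (∑ l ∈ range n, (∏ i ∈ (range n).erase l, M i) * ‖a l - b l‖) * M n
          + (∏ i ∈ range n, M i) * ‖a n - b n‖ := by
          have hnn : 0 ≤ ∑ l ∈ range n, (∏ i ∈ (range n).erase l, M i) * ‖a l - b l‖ :=
            Finset.sum_nonneg fun l _ => mul_nonneg
              (Finset.prod_nonneg fun i _ => hM i) (norm_nonneg _)
          gcongr
          exact ha n

private lemma dist_iterate_le_aux {X : Type*} [MetricSpace X]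
    (T : X → X) (ν : ℝ) (hν0 : 0 ≤ ν)
    (hT : ∀ x y, dist (T x) (T y) ≤ ν * dist x y) (x y : X) :
    ∀ l : ℕ, dist (T^[l] x) (T^[l] y) ≤ ν ^ l * dist x y := by
  intro l
  induction l with
  | zero => simp
  | succ l ih =>
    rw [Function.iterate_succ_apply', Function.iterate_succ_apply']
    calc dist (T (T^[l] x)) (T (T^[l] y)) ≤ ν * dist (T^[l] x) (T^[l] y) := hT _ _
      _ ≤ ν * (ν ^ l * dist x y) := by gcongr
      _ = ν ^ (l+1) * dist x y := by ring

/-- Hölder bound for a product `g_0 ⋅ (g_1 ∘ T) ⋯ (g_k ∘ T^k)` along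
a uniformly contracting map `T`. -/
theorem holder_product_along_contraction
    {X : Type*} [MetricSpace X] [Nonempty X]
    (T : X → X) (ν : ℝ) (hν : ν ∈ Set.Ioo (0:ℝ) 1)
    (hT : ∀ x y, dist (T x) (T y) ≤ ν * dist x y)
    (β δ : ℝ) (hβ : β ∈ Set.Ioo (0:ℝ) 1) (hδ : 0 < δ)
    (k : ℕ) (g : ℕ → X → ℂ) (H : ℕ → ℝ)
    (hbdd : ∀ i, BddAbove (Set.range fun x => ‖g i x‖))
    (hH : ∀ l ≤ k, ∀ x y, dist x y ≤ δ →
      ‖g l x - g l y‖ ≤ H l * dist x y ^ β)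
    (hmin : 0 < (range (k + 1)).inf' (by simp) fun i => ⨆ x, ‖g i x‖) :
    ∀ x y, dist x y ≤ δ →
      ‖(∏ l ∈ range (k + 1), g l (T^[l] x)) -
        ∏ l ∈ range (k + 1), g l (T^[l] y)‖ ≤
      ((∏ i ∈ range (k + 1), ⨆ x, ‖g i x‖) /
          (range (k + 1)).inf' (by simp) fun i => ⨆ x, ‖g i x‖) *
        (((range (k + 1)).sup' (by simp) H) / (1 - ν ^ β)) * dist x y ^ β := by
  intro x y hxy
  set M : ℕ → ℝ := fun i => ⨆ x, ‖g i x‖ with hM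
  set m : ℝ := (range (k + 1)).inf' (by simp) M with hm
  set S : ℝ := (range (k + 1)).sup' (by simp) H with hS
  have hMle : ∀ i (z : X), ‖g i z‖ ≤ M i := fun i z => le_ciSup (hbdd i) z
  have hM0 : ∀ i, 0 ≤ M i := fun i =>
    (norm_nonneg _).trans (hMle i (Classical.arbitrary X))
  have hmM : ∀ i ∈ range (k+1), m ≤ M i := fun i hi => Finset.inf'_le _ hi
  have hMpos : ∀ i ∈ range (k+1), 0 < M i := fun i hi => lt_of_lt_of_le hmin (hmM i hi)
  have hPpos : 0 < ∏ i ∈ range (k+1), M i := Finset.prod_pos hMpos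
  -- case dist x y = 0
  rcases eq_or_lt_of_le (dist_nonneg (x := x) (y := y)) with hd0 | hdpos
  · have hxy' : x = y := by
      have := dist_eq_zero.mp hd0.symm
      exact this
    subst hxy'
    rw [← hd0, Real.zero_rpow (ne_of_gt hβ.1)]
    simp
  -- now dist x y > 0
  have hHnn : ∀ l ≤ k, 0 ≤ H l := by
    intro l hl
    have h1 := hH l hl x y hxy
    have h2 : (0:ℝ) < dist x y ^ β := Real.rpow_pos_of_pos hdpos β
    nlinarith [norm_nonneg (g l x - g l y)]
  have hSnn : 0 ≤ S := le_trans (hHnn 0 (Nat.zero_le k)) (Finset.le_sup' H (by simp))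
  have hr1 : ν ^ β < 1 := Real.rpow_lt_one (le_of_lt hν.1) hν.2 hβ.1
  have hr0 : 0 < ν ^ β := Real.rpow_pos_of_pos hν.1 β
  have h1r : 0 < 1 - ν ^ β := by linarith
  -- telescoping bound
  have tele := norm_prod_sub_prod_le_aux (k+1) (fun l => g l (T^[l] x))
    (fun l => g l (T^[l] y)) M (fun i => hMle i _) (fun i => hMle i _)
  refine tele.trans ?_
  -- bound each term
  have hterm : ∀ l ∈ range (k+1),
      (∏ i ∈ (range (k+1)).erase l, M i) * ‖g l (T^[l] x) - g l (T^[l] y)‖ ≤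
      ((∏ i ∈ range (k+1), M i) / m) * (S * ((ν ^ β) ^ l * dist x y ^ β)) := by
    intro l hl
    have hlk : l ≤ k := Nat.lt_succ_iff.mp (mem_range.mp hl)
    have hdl : dist (T^[l] x) (T^[l] y) ≤ ν ^ l * dist x y :=
      dist_iterate_le_aux T ν (le_of_lt hν.1) hT x y l
    have hνl1 : ν ^ l ≤ 1 := pow_le_one₀ (le_of_lt hν.1) (le_of_lt hν.2)
    have hdlδ : dist (T^[l] x) (T^[l] y) ≤ δ := by
      refine hdl.trans (le_trans ?_ hxy)
      nlinarith [dist_nonneg (x := x) (y := y)]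
    have h1 : ‖g l (T^[l] x) - g l (T^[l] y)‖ ≤ H l * (ν ^ l * dist x y) ^ β :=
      (hH l hlk _ _ hdlδ).trans (mul_le_mul_of_nonneg_left
        (Real.rpow_le_rpow dist_nonneg hdl (le_of_lt hβ.1)) (hHnn l hlk))
    have h2 : (ν ^ l * dist x y) ^ β = (ν ^ β) ^ l * dist x y ^ β := by
      rw [Real.mul_rpow (pow_nonneg (le_of_lt hν.1) l) dist_nonneg]
      congr 1
      rw [← Real.rpow_natCast ν l, ← Real.rpow_natCast (ν ^ β) l,
        ← Real.rpow_mul (le_of_lt hν.1), ← Real.rpow_mul (le_of_lt hν.1), mul_comm]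
    have h3 : (∏ i ∈ (range (k+1)).erase l, M i) = (∏ i ∈ range (k+1), M i) / M l := by
      rw [eq_div_iff (ne_of_gt (hMpos l hl))]
      exact Finset.prod_erase_mul _ _ hl
    have h4 : (∏ i ∈ range (k+1), M i) / M l ≤ (∏ i ∈ range (k+1), M i) / m :=
      div_le_div_of_nonneg_left (le_of_lt hPpos) hmin (hmM l hl)
    calc (∏ i ∈ (range (k+1)).erase l, M i) * ‖g l (T^[l] x) - g l (T^[l] y)‖
        ≤ ((∏ i ∈ range (k+1), M i) / m) * (H l * ((ν ^ β) ^ l * dist x y ^ β)) := by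
          rw [h3, ← h2]
          refine mul_le_mul h4 (h1.trans_eq ?_) (norm_nonneg _)
            (div_nonneg (le_of_lt hPpos) (le_of_lt hmin))
          rw [h2]
      _ ≤ ((∏ i ∈ range (k+1), M i) / m) * (S * ((ν ^ β) ^ l * dist x y ^ β)) :=
          mul_le_mul_of_nonneg_left (mul_le_mul_of_nonneg_right
            (Finset.le_sup' H hl) (by positivity))
            (div_nonneg (le_of_lt hPpos) (le_of_lt hmin))
  refine (Finset.sum_le_sum hterm).trans ?_
  rw [← Finset.mul_sum]
  have hgeom : ∑ l ∈ range (k+1), (S * ((ν ^ β) ^ l * dist x y ^ β))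
      = S * dist x y ^ β * ∑ l ∈ range (k+1), (ν ^ β) ^ l := by
    rw [Finset.mul_sum]
    refine Finset.sum_congr rfl fun l _ => by ring
  rw [hgeom]
  have hgs : ∑ l ∈ range (k+1), (ν ^ β) ^ l ≤ 1 / (1 - ν ^ β) := by
    rw [geom_sum_eq (ne_of_lt hr1) (k+1)]
    have heq : ((ν ^ β) ^ (k+1) - 1) / (ν ^ β - 1)
        = (1 - (ν ^ β) ^ (k+1)) / (1 - ν ^ β) := by
      rw [← neg_div_neg_eq]; ring_nf
    rw [heq, div_le_div_iff₀ h1r h1r]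
    nlinarith [pow_pos hr0 (k+1)]
  calc ((∏ i ∈ range (k+1), M i) / m) * (S * dist x y ^ β * ∑ l ∈ range (k+1), (ν ^ β) ^ l)
      ≤ ((∏ i ∈ range (k+1), M i) / m) * (S * dist x y ^ β * (1 / (1 - ν ^ β))) :=
        mul_le_mul_of_nonneg_left (mul_le_mul_of_nonneg_left hgs (by positivity))
          (div_nonneg (le_of_lt hPpos) (le_of_lt hmin))
    _ = ((∏ i ∈ range (k+1), M i) / m) * (S / (1 - ν ^ β)) * dist x y ^ β := by
        ring
end

section
/- Let ℒ be the transfer operator of the doubling map and let g : [0,1] → ℂ with |g(x)| = 1 for all x. Define w = g · (g∘F) ⋯ (g∘F^{p-1}). Then Var(ℒ^{p-1} w) ≤ 4 Var(g). -/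
open scoped ENNReal

/-- Auxiliary: the transfer operator of the doubling map, concretely. -/
private noncomputable def dL (h : ℝ → ℂ) : ℝ → ℂ := fun x => (h (x / 2) + h ((x + 1) / 2)) / 2

/-- Auxiliary sequence `u₀ = ℒ g`, `u_{k+1} = ℒ((g∘fract) · u_k)`. -/
private noncomputable def dU (g : ℝ → ℂ) : ℕ → ℝ → ℂ
  | 0 => dL g
  | k + 1 => dL (fun x => g (Int.fract x) * dU g k x)

/-- Master comparison lemma for variations. -/
private lemma evar_comb {f u v : ℝ → ℂ} {s : Set ℝ} {C1 C2 : ℝ≥0∞}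
    (h : ∀ x y : ℝ, edist (f x) (f y) ≤ C1 * edist (u x) (u y) + C2 * edist (v x) (v y)) :
    eVariationOn f s ≤ C1 * eVariationOn u s + C2 * eVariationOn v s := by
  have hdef : eVariationOn f s =
      ⨆ p : ℕ × { q : ℕ → ℝ // Monotone q ∧ ∀ i, q i ∈ s },
        ∑ i ∈ Finset.range p.1, edist (f (p.2.1 (i + 1))) (f (p.2.1 i)) := rfl
  rw [hdef]
  refine iSup_le ?_
  rintro ⟨n, ⟨q, hq, hqs⟩⟩
  calc (∑ i ∈ Finset.range n, edist (f (q (i + 1))) (f (q i)))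
      ≤ ∑ i ∈ Finset.range n,
          (C1 * edist (u (q (i + 1))) (u (q i)) + C2 * edist (v (q (i + 1))) (v (q i))) :=
        Finset.sum_le_sum fun i _ => h _ _
    _ = C1 * (∑ i ∈ Finset.range n, edist (u (q (i + 1))) (u (q i)))
        + C2 * (∑ i ∈ Finset.range n, edist (v (q (i + 1))) (v (q i))) := by
        rw [Finset.sum_add_distrib, Finset.mul_sum, Finset.mul_sum]
    _ ≤ _ := add_le_add (mul_le_mul_right (eVariationOn.sum_le (f := u) (n := n) hq hqs) _)
        (mul_le_mul_right (eVariationOn.sum_le (f := v) (n := n) hq hqs) _)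

/-- Removing the right endpoint costs at most the maximal jump to the endpoint. -/
private lemma evar_icc_point (f : ℝ → ℂ) {a b : ℝ} {M : ℝ≥0∞}
    (hM : ∀ x ∈ Set.Icc a b, edist (f x) (f b) ≤ M) :
    eVariationOn f (Set.Icc a b) ≤ eVariationOn f (Set.Ico a b) + M := by
  have hdef : eVariationOn f (Set.Icc a b) =
      ⨆ p : ℕ × { q : ℕ → ℝ // Monotone q ∧ ∀ i, q i ∈ Set.Icc a b },
        ∑ i ∈ Finset.range p.1, edist (f (p.2.1 (i + 1))) (f (p.2.1 i)) := rfl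
  rw [hdef]
  refine iSup_le ?_
  rintro ⟨n, ⟨q, hq, hqs⟩⟩
  by_cases hb : ∃ i, q i = b
  · have hm := Nat.find_spec hb
    set m := Nat.find hb with hmdef
    have hlt : ∀ i < m, q i < b := fun i hi =>
      lt_of_le_of_ne (hqs i).2 (Nat.find_min hb hi)
    have hge : ∀ i, m ≤ i → q i = b := fun i hi =>
      le_antisymm (hqs i).2 (hm ▸ hq hi)
    rcases Nat.eq_zero_or_pos m with h0 | h0
    · have : ∀ i ∈ Finset.range n, edist (f (q (i + 1))) (f (q i)) = 0 := by
        intro i _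
        rw [hge _ (by omega), hge _ (by omega), edist_self]
      rw [Finset.sum_congr rfl this]
      simp
    · set r : ℕ → ℝ := fun i => q (min i (m - 1)) with hrdef
      have hr : Monotone r := fun i j hij => hq (min_le_min hij le_rfl)
      have hrs : ∀ i, r i ∈ Set.Ico a b := fun i =>
        ⟨(hqs _).1, hlt _ (by omega)⟩
      have hterm : ∀ i ∈ Finset.range n, edist (f (q (i + 1))) (f (q i)) ≤
          edist (f (r (i + 1))) (f (r i)) + (if i = m - 1 then M else 0) := by
        intro i _
        rcases lt_trichotomy i (m - 1) with hi | hi | hi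
        · have e1 : r (i + 1) = q (i + 1) := by
            simp only [hrdef]; rw [min_eq_left (by omega)]
          have e2 : r i = q i := by
            simp only [hrdef]; rw [min_eq_left (by omega)]
          rw [e1, e2, if_neg (by omega), add_zero]
        · rw [if_pos hi]
          have e1 : q (i + 1) = b := hge _ (by omega)
          have : edist (f (q (i + 1))) (f (q i)) ≤ M := by
            rw [e1, edist_comm]
            exact hM _ (hqs i)
          exact le_trans this le_add_self
        · have e1 : q (i + 1) = b := hge _ (by omega)
          have e2 : q i = b := hge _ (by omega)
          rw [e1, e2, edist_self]
          exact zero_le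
      calc (∑ i ∈ Finset.range n, edist (f (q (i + 1))) (f (q i)))
          ≤ ∑ i ∈ Finset.range n,
              (edist (f (r (i + 1))) (f (r i)) + (if i = m - 1 then M else 0)) :=
            Finset.sum_le_sum hterm
        _ = (∑ i ∈ Finset.range n, edist (f (r (i + 1))) (f (r i)))
            + ∑ i ∈ Finset.range n, (if i = m - 1 then M else 0) :=
            Finset.sum_add_distrib
        _ ≤ eVariationOn f (Set.Ico a b) + M := by
            refine add_le_add (eVariationOn.sum_le (f := f) (n := n) hr fun i => hrs i) ?_
            rw [Finset.sum_ite_eq' (Finset.range n) (m - 1) (fun _ => M)]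
            split <;> simp
  · push_neg at hb
    have hqs' : ∀ i, q i ∈ Set.Ico a b := fun i =>
      ⟨(hqs i).1, lt_of_le_of_ne (hqs i).2 (hb i)⟩
    exact le_trans (eVariationOn.sum_le (f := f) (n := n) hq hqs') le_self_add

/-- Variation of `g ∘ fract` on `[0,1]` is at most twice that of `g`. -/
private lemma evar_fract (g : ℝ → ℂ) :
    eVariationOn (fun x => g (Int.fract x)) (Set.Icc 0 1) ≤
      2 * eVariationOn g (Set.Icc 0 1) := by
  have h1 : eVariationOn (fun x => g (Int.fract x)) (Set.Icc 0 1) ≤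
      eVariationOn (fun x => g (Int.fract x)) (Set.Ico 0 1)
        + eVariationOn g (Set.Icc 0 1) := by
    apply evar_icc_point
    intro x hx
    rcases eq_or_lt_of_le hx.2 with h | h
    · rw [h, edist_self]; exact zero_le
    · have hfx : Int.fract x = x := Int.fract_eq_self.mpr ⟨hx.1, h⟩
      have hf1 : Int.fract (1 : ℝ) = 0 := by norm_num [Int.fract]
      simp only [hfx, hf1]
      exact eVariationOn.edist_le g ⟨hx.1, hx.2⟩ ⟨le_rfl, zero_le_one⟩
  have h2 : eVariationOn (fun x => g (Int.fract x)) (Set.Ico 0 1)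
      = eVariationOn g (Set.Ico 0 1) :=
    eVariationOn.eq_of_eqOn fun x hx => by
      simp [Int.fract_eq_self.mpr ⟨hx.1, hx.2⟩]
  calc eVariationOn (fun x => g (Int.fract x)) (Set.Icc 0 1)
      ≤ eVariationOn g (Set.Ico 0 1) + eVariationOn g (Set.Icc 0 1) := by
        rw [← h2]; exact h1
    _ ≤ eVariationOn g (Set.Icc 0 1) + eVariationOn g (Set.Icc 0 1) :=
        add_le_add_left (eVariationOn.mono g Set.Ico_subset_Icc_self) _
    _ = 2 * eVariationOn g (Set.Icc 0 1) := (two_mul _).symm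

private lemma edist_avg (a b c d : ℂ) :
    edist ((a + b) / 2) ((c + d) / 2) ≤ 2⁻¹ * edist a c + 2⁻¹ * edist b d := by
  have h1 : dist ((a + b) / 2) ((c + d) / 2) ≤ dist a c / 2 + dist b d / 2 := by
    rw [dist_eq_norm, dist_eq_norm, dist_eq_norm]
    have he : (a + b) / 2 - (c + d) / 2 = ((a - c) + (b - d)) / 2 := by ring
    rw [he, norm_div]
    have h2 : ‖(2 : ℂ)‖ = 2 := by norm_num
    rw [h2]
    have := norm_add_le (a - c) (b - d)
    linarith
  calc edist ((a + b) / 2) ((c + d) / 2)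
      = ENNReal.ofReal (dist ((a + b) / 2) ((c + d) / 2)) := edist_dist _ _
    _ ≤ ENNReal.ofReal (dist a c / 2 + dist b d / 2) := ENNReal.ofReal_le_ofReal h1
    _ = ENNReal.ofReal (dist a c / 2) + ENNReal.ofReal (dist b d / 2) :=
        ENNReal.ofReal_add (by positivity) (by positivity)
    _ = 2⁻¹ * edist a c + 2⁻¹ * edist b d := by
        rw [ENNReal.ofReal_div_of_pos (by norm_num),
          ENNReal.ofReal_div_of_pos (by norm_num), edist_dist, edist_dist]
        norm_num [ENNReal.div_eq_inv_mul]

/-- The transfer operator halves variation on `[0,1]`. -/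
private lemma evar_dL (h : ℝ → ℂ) :
    eVariationOn (dL h) (Set.Icc 0 1) ≤ eVariationOn h (Set.Icc 0 1) / 2 := by
  have hcomb :
      eVariationOn (dL h) (Set.Icc 0 1) ≤
        2⁻¹ * eVariationOn (fun x => h (x / 2)) (Set.Icc 0 1)
          + 2⁻¹ * eVariationOn (fun x => h ((x + 1) / 2)) (Set.Icc 0 1) :=
    evar_comb fun x y => edist_avg _ _ _ _
  have hmono1 : MonotoneOn (fun x : ℝ => x / 2) (Set.Icc 0 1) := by
    intro x _ y _ hxy; dsimp only; linarith
  have hmono2 : MonotoneOn (fun x : ℝ => (x + 1) / 2) (Set.Icc 0 1) := by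
    intro x _ y _ hxy; dsimp only; linarith
  have himg1 : (fun x : ℝ => x / 2) '' Set.Icc 0 1 = Set.Icc 0 (1 / 2) := by
    ext y
    constructor
    · rintro ⟨x, ⟨hx0, hx1⟩, rfl⟩
      exact ⟨by linarith, by linarith⟩
    · rintro ⟨hy0, hy1⟩
      exact ⟨2 * y, ⟨by linarith, by linarith⟩, by ring⟩
  have himg2 : (fun x : ℝ => (x + 1) / 2) '' Set.Icc 0 1 = Set.Icc (1 / 2) 1 := by
    ext y
    constructor
    · rintro ⟨x, ⟨hx0, hx1⟩, rfl⟩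
      exact ⟨by linarith, by linarith⟩
    · rintro ⟨hy0, hy1⟩
      exact ⟨2 * y - 1, ⟨by linarith, by linarith⟩, by ring⟩
  have hc1 : eVariationOn (fun x => h (x / 2)) (Set.Icc 0 1)
      = eVariationOn h (Set.Icc 0 (1 / 2)) := by
    have := eVariationOn.comp_eq_of_monotoneOn h (fun x : ℝ => x / 2) hmono1
    rwa [himg1] at this
  have hc2 : eVariationOn (fun x => h ((x + 1) / 2)) (Set.Icc 0 1)
      = eVariationOn h (Set.Icc (1 / 2) 1) := by
    have := eVariationOn.comp_eq_of_monotoneOn h (fun x : ℝ => (x + 1) / 2) hmono2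
    rwa [himg2] at this
  have hsplit : eVariationOn h (Set.Icc 0 (1 / 2)) + eVariationOn h (Set.Icc (1 / 2) 1)
      = eVariationOn h (Set.Icc (0 : ℝ) 1) := by
    have := eVariationOn.Icc_add_Icc h (s := Set.univ)
      (show (0 : ℝ) ≤ 1 / 2 by norm_num) (show (1 / 2 : ℝ) ≤ 1 by norm_num)
      (Set.mem_univ _)
    simpa using this
  calc eVariationOn (dL h) (Set.Icc 0 1)
      ≤ 2⁻¹ * eVariationOn (fun x => h (x / 2)) (Set.Icc 0 1)
        + 2⁻¹ * eVariationOn (fun x => h ((x + 1) / 2)) (Set.Icc 0 1) := hcomb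
    _ = 2⁻¹ * (eVariationOn h (Set.Icc 0 (1 / 2)) + eVariationOn h (Set.Icc (1 / 2) 1)) := by
        rw [hc1, hc2, mul_add]
    _ = eVariationOn h (Set.Icc 0 1) / 2 := by
        rw [hsplit, ENNReal.div_eq_inv_mul]

/-- Variation of a product of functions with norm at most 1. -/
private lemma evar_mul {A B : ℝ → ℂ} {s : Set ℝ}
    (hA : ∀ x, ‖A x‖ ≤ 1) (hB : ∀ x, ‖B x‖ ≤ 1) :
    eVariationOn (fun x => A x * B x) s ≤ eVariationOn A s + eVariationOn B s := by
  have key : ∀ x y : ℝ, edist (A x * B x) (A y * B y) ≤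
      1 * edist (A x) (A y) + 1 * edist (B x) (B y) := by
    intro x y
    have h1 : dist (A x * B x) (A y * B y) ≤ dist (A x) (A y) + dist (B x) (B y) := by
      rw [dist_eq_norm, dist_eq_norm, dist_eq_norm]
      have he : A x * B x - A y * B y = A x * (B x - B y) + (A x - A y) * B y := by ring
      rw [he]
      calc ‖A x * (B x - B y) + (A x - A y) * B y‖
          ≤ ‖A x * (B x - B y)‖ + ‖(A x - A y) * B y‖ := norm_add_le _ _
        _ = ‖A x‖ * ‖B x - B y‖ + ‖A x - A y‖ * ‖B y‖ := by rw [norm_mul, norm_mul]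
        _ ≤ 1 * ‖B x - B y‖ + ‖A x - A y‖ * 1 := by
            gcongr
            · exact hA x
            · exact hB y
        _ = ‖A x - A y‖ + ‖B x - B y‖ := by ring
    calc edist (A x * B x) (A y * B y)
        = ENNReal.ofReal (dist (A x * B x) (A y * B y)) := edist_dist _ _
      _ ≤ ENNReal.ofReal (dist (A x) (A y) + dist (B x) (B y)) :=
          ENNReal.ofReal_le_ofReal h1
      _ = ENNReal.ofReal (dist (A x) (A y)) + ENNReal.ofReal (dist (B x) (B y)) :=
          ENNReal.ofReal_add dist_nonneg dist_nonneg
      _ = 1 * edist (A x) (A y) + 1 * edist (B x) (B y) := by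
          rw [edist_dist, edist_dist, one_mul, one_mul]
  have := evar_comb (f := fun x => A x * B x) (s := s) key
  simpa using this

private lemma norm_dL {h : ℝ → ℂ} (hh : ∀ x, ‖h x‖ ≤ 1) : ∀ x, ‖dL h x‖ ≤ 1 := by
  intro x
  unfold dL
  rw [norm_div]
  have h2 : ‖(2 : ℂ)‖ = 2 := by norm_num
  rw [h2]
  have := norm_add_le (h (x / 2)) (h ((x + 1) / 2))
  have := hh (x / 2)
  have := hh ((x + 1) / 2)
  linarith

private lemma norm_dU {g : ℝ → ℂ} (hg : ∀ x, ‖g x‖ = 1) :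
    ∀ k x, ‖dU g k x‖ ≤ 1 := by
  intro k
  induction k with
  | zero => exact norm_dL fun x => (hg x).le
  | succ k ih =>
    refine norm_dL fun x => ?_
    rw [norm_mul, hg (Int.fract x), one_mul]
    exact ih x

private lemma evar_dU {g : ℝ → ℂ} (hg : ∀ x, ‖g x‖ = 1) :
    ∀ k, eVariationOn (dU g k) (Set.Icc 0 1) ≤ 2 * eVariationOn g (Set.Icc 0 1) := by
  intro k
  induction k with
  | zero =>
    calc eVariationOn (dU g 0) (Set.Icc 0 1)
        ≤ eVariationOn g (Set.Icc 0 1) / 2 := evar_dL g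
      _ ≤ eVariationOn g (Set.Icc 0 1) := ENNReal.half_le_self
      _ ≤ 2 * eVariationOn g (Set.Icc 0 1) := by
          nth_rewrite 1 [← one_mul (eVariationOn g (Set.Icc 0 1))]
          exact mul_le_mul_left one_le_two _
  | succ k ih =>
    have hmul : eVariationOn (fun x => g (Int.fract x) * dU g k x) (Set.Icc 0 1) ≤
        eVariationOn (fun x => g (Int.fract x)) (Set.Icc 0 1)
          + eVariationOn (dU g k) (Set.Icc 0 1) :=
      evar_mul (fun x => (hg _).le) (norm_dU hg k)
    calc eVariationOn (dU g (k + 1)) (Set.Icc 0 1)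
        ≤ eVariationOn (fun x => g (Int.fract x) * dU g k x) (Set.Icc 0 1) / 2 :=
          evar_dL _
      _ ≤ (2 * eVariationOn g (Set.Icc 0 1) + 2 * eVariationOn g (Set.Icc 0 1)) / 2 := by
          gcongr
          exact le_trans hmul (add_le_add (evar_fract g) ih)
      _ ≤ 2 * eVariationOn g (Set.Icc 0 1) := by
          rw [ENNReal.div_le_iff_le_mul (Or.inl two_ne_zero) (Or.inl ENNReal.ofNat_ne_top)]
          rw [mul_two]

/-- for the doubling map `F` and its transfer operator `ℒ`, if
`|g| ≡ 1` and `w = g ⋅ (g∘F) ⋯ (g∘F^{p-1})`, then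
`Var(ℒ^{p-1} w) ≤ 4 Var g` on `[0,1]`. -/
theorem doubling_block_variation_bound
    (F : ℝ → ℝ) (hF : F = fun x => Int.fract (2 * x))
    (L : (ℝ → ℂ) → (ℝ → ℂ))
    (hL : L = fun h x => (h (x / 2) + h ((x + 1) / 2)) / 2)
    (g : ℝ → ℂ) (hg : ∀ x, ‖g x‖ = 1)
    (p : ℕ) (hp : 1 ≤ p)
    (w : ℝ → ℂ) (hw : w = fun x => ∏ l ∈ Finset.range p, g (F^[l] x)) :
    eVariationOn (L^[p - 1] w) (Set.Icc 0 1) ≤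
      4 * eVariationOn g (Set.Icc 0 1) := by
  have hL' : L = dL := by rw [hL]; rfl
  -- basic facts about F
  have fact3 : ∀ y : ℝ, F (Int.fract y) = Int.fract (2 * y) := by
    intro y
    rw [hF]
    dsimp only
    have h2 : (2 : ℝ) * Int.fract y = 2 * y - ((2 * ⌊y⌋ : ℤ) : ℝ) := by
      rw [Int.fract]; push_cast; ring
    rw [h2, Int.fract_sub_intCast]
  have fact1 : ∀ x : ℝ, F (x / 2) = Int.fract x := by
    intro x
    rw [hF]
    dsimp only
    rw [mul_div_cancel₀ x (two_ne_zero)]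
  have fact2 : ∀ x : ℝ, F ((x + 1) / 2) = Int.fract x := by
    intro x
    rw [hF]
    dsimp only
    rw [mul_div_cancel₀ (x + 1) (two_ne_zero), Int.fract_add_one]
  have fact1' : ∀ x : ℝ, F (Int.fract (x / 2)) = Int.fract x := by
    intro x
    rw [fact3, mul_div_cancel₀ x (two_ne_zero)]
  have fact2' : ∀ x : ℝ, F (Int.fract ((x + 1) / 2)) = Int.fract x := by
    intro x
    rw [fact3, mul_div_cancel₀ (x + 1) (two_ne_zero), Int.fract_add_one]
  have hsplit : ∀ (m : ℕ) (y : ℝ),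
      (∏ l ∈ Finset.range (m + 1), g (F^[l] y))
        = (∏ l ∈ Finset.range m, g (F^[l] (F y))) * g y := by
    intro m y
    rw [Finset.prod_range_succ']
    simp [Function.iterate_succ_apply]
  -- the key structural identity
  have key : ∀ k, k + 1 ≤ p → L^[k + 1] w =
      fun x => (∏ l ∈ Finset.range (p - (k + 1)), g (F^[l] (Int.fract x))) * dU g k x := by
    intro k
    induction k with
    | zero =>
      intro hk
      funext x
      rw [Function.iterate_one, hL]
      dsimp only
      rw [hw]
      dsimp only
      obtain ⟨p', rfl⟩ : ∃ p', p = p' + 1 := ⟨p - 1, by omega⟩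
      rw [hsplit p' (x / 2), hsplit p' ((x + 1) / 2), fact1, fact2]
      simp only [Nat.add_sub_cancel]
      show _ = (∏ l ∈ Finset.range p', g (F^[l] (Int.fract x)))
        * ((g (x / 2) + g ((x + 1) / 2)) / 2)
      ring
    | succ k ih =>
      intro hk
      have hIH := ih (by omega)
      funext x
      rw [Function.iterate_succ_apply', hIH, hL]
      dsimp only
      obtain ⟨m, hm⟩ : ∃ m, p - (k + 1) = m + 1 := ⟨p - (k + 2), by omega⟩
      rw [hm, hsplit m (Int.fract (x / 2)), hsplit m (Int.fract ((x + 1) / 2)),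
        fact1', fact2']
      have hm2 : p - (k + 1 + 1) = m := by omega
      rw [hm2]
      show ((∏ l ∈ Finset.range m, g (F^[l] (Int.fract x))) * g (Int.fract (x / 2))
            * dU g k (x / 2)
          + (∏ l ∈ Finset.range m, g (F^[l] (Int.fract x))) * g (Int.fract ((x + 1) / 2))
            * dU g k ((x + 1) / 2)) / 2
        = (∏ l ∈ Finset.range m, g (F^[l] (Int.fract x)))
          * ((g (Int.fract (x / 2)) * dU g k (x / 2)
            + g (Int.fract ((x + 1) / 2)) * dU g k ((x + 1) / 2)) / 2)
      ring
  rcases Nat.lt_or_ge p 2 with hp2 | hp2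
  · -- p = 1
    have hp1 : p = 1 := by omega
    subst hp1
    simp only [Nat.sub_self, Function.iterate_zero, id]
    have hwg : w = fun x => g x := by
      funext x
      rw [hw]
      simp
    rw [hwg]
    calc eVariationOn (fun x => g x) (Set.Icc 0 1)
        = 1 * eVariationOn g (Set.Icc 0 1) := by rw [one_mul]
      _ ≤ 4 * eVariationOn g (Set.Icc 0 1) := by
          exact mul_le_mul_left (by norm_num) _
  · obtain ⟨k, hk⟩ : ∃ k, p - 1 = k + 1 := ⟨p - 2, by omega⟩
    rw [hk, key k (by omega)]
    have h1 : p - (k + 1) = 1 := by omega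
    rw [h1]
    simp only [Finset.prod_range_one, Function.iterate_zero, id]
    calc eVariationOn (fun x => g (Int.fract x) * dU g k x) (Set.Icc 0 1)
        ≤ eVariationOn (fun x => g (Int.fract x)) (Set.Icc 0 1)
          + eVariationOn (dU g k) (Set.Icc 0 1) :=
          evar_mul (fun x => (hg _).le) (norm_dU hg k)
      _ ≤ 2 * eVariationOn g (Set.Icc 0 1) + 2 * eVariationOn g (Set.Icc 0 1) :=
          add_le_add (evar_fract g) (evar_dU hg k)
      _ = 4 * eVariationOn g (Set.Icc 0 1) := by
          rw [← add_mul]; norm_num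
end

section
/- Suppose a transfer operator ℒ satisfies the Lasota–Yorke inequality Var(ℒg) ≤ α Var(g) + A‖g‖₁ for all g ∈ BV, with α ∈ (0,1). If furthermore ℒφ = φ with φ ≥ 0, ‖φ‖₁ = 1, ‖φ‖_∞ < ∞, |g| ≤ 1 pointwise, and G_p = φ · g · (g∘F) ⋯ (g∘F^p), then for every p ≥ 0, Var(ℒ^p G_p) ≤ α^p Var(φ g) + (A + ‖φ‖_∞ Var(g)) / (1 − α). -/
open MeasureTheory
open scoped ENNReal

lemma evar_mul_le (f h : ℝ → ℂ) (s : Set ℝ) (Mf Mh : ℝ≥0∞)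
    (hf : ∀ x, (‖f x‖₊ : ℝ≥0∞) ≤ Mf) (hh : ∀ x, (‖h x‖₊ : ℝ≥0∞) ≤ Mh) :
    eVariationOn (fun x => f x * h x) s ≤
      Mf * eVariationOn h s + Mh * eVariationOn f s := by
  have key : ∀ a b : ℝ, edist (f a * h a) (f b * h b) ≤
      Mf * edist (h a) (h b) + Mh * edist (f a) (f b) := by
    intro a b
    rw [(fun z w => edist_eq_enorm_sub z w : ∀ z w : ℂ, edist z w = (‖z - w‖₊ : ℝ≥0∞)), (fun z w => edist_eq_enorm_sub z w : ∀ z w : ℂ, edist z w = (‖z - w‖₊ : ℝ≥0∞)), (fun z w => edist_eq_enorm_sub z w : ∀ z w : ℂ, edist z w = (‖z - w‖₊ : ℝ≥0∞))]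
    have e : f a * h a - f b * h b = f a * (h a - h b) + (f a - f b) * h b := by ring
    rw [e]
    calc (‖f a * (h a - h b) + (f a - f b) * h b‖₊ : ℝ≥0∞)
        ≤ (‖f a * (h a - h b)‖₊ : ℝ≥0∞) + ‖(f a - f b) * h b‖₊ := by
          exact_mod_cast nnnorm_add_le _ _
      _ = (‖f a‖₊ : ℝ≥0∞) * ‖h a - h b‖₊ + (‖f a - f b‖₊ : ℝ≥0∞) * ‖h b‖₊ := by
          rw [nnnorm_mul, nnnorm_mul]; push_cast; ring
      _ ≤ Mf * ‖h a - h b‖₊ + Mh * ‖f a - f b‖₊ := by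
          refine add_le_add (mul_le_mul_left (hf a) _) ?_
          rw [mul_comm]
          exact mul_le_mul_left (hh b) _
  refine iSup_le ?_
  rintro ⟨n, u, hu, us⟩
  calc ∑ i ∈ Finset.range n, edist (f (u (i + 1)) * h (u (i + 1))) (f (u i) * h (u i))
      ≤ ∑ i ∈ Finset.range n,
          (Mf * edist (h (u (i + 1))) (h (u i)) + Mh * edist (f (u (i + 1))) (f (u i))) :=
        Finset.sum_le_sum fun i _ => key _ _
    _ = Mf * ∑ i ∈ Finset.range n, edist (h (u (i + 1))) (h (u i)) +
          Mh * ∑ i ∈ Finset.range n, edist (f (u (i + 1))) (f (u i)) := by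
        rw [Finset.sum_add_distrib, Finset.mul_sum, Finset.mul_sum]
    _ ≤ Mf * eVariationOn h s + Mh * eVariationOn f s := by
        gcongr
        · exact eVariationOn.sum_le (f := h) hu us
        · exact eVariationOn.sum_le (f := f) hu us

/-- iterating the Lasota–Yorke inequality along the Bernstein block
`G_p = φ ⋅ g ⋅ (g∘F) ⋯ (g∘F^p)` (with `|g| ≤ 1`, `ℒφ = φ`) yields
`Var(ℒ^p G_p) ≤ α^p Var(φ g) + (A + ‖φ‖_∞ Var g)/(1-α)`. -/
theorem lasota_yorke_block_variation
    (F : ℝ → ℝ) (L : (ℝ → ℂ) → (ℝ → ℂ))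
    (α A : ℝ) (hα : α ∈ Set.Ioo (0:ℝ) 1) (hA : 0 ≤ A)
    (hLY : ∀ h : ℝ → ℂ, eVariationOn (L h) (Set.Icc 0 1) ≤
      ENNReal.ofReal α * eVariationOn h (Set.Icc 0 1) +
        ENNReal.ofReal A * ENNReal.ofReal (∫ x in Set.Icc (0:ℝ) 1, ‖h x‖))
    (hcomp : ∀ h₁ h₂ : ℝ → ℂ,
      L (fun x => h₁ (F x) * h₂ x) = fun x => h₁ x * L h₂ x)
    (φ : ℝ → ℝ) (hφ0 : ∀ x, 0 ≤ φ x)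
    (hφ1 : ∫ x in Set.Icc (0:ℝ) 1, φ x = 1)
    (Nφ : ℝ) (hNφ : ∀ x, φ x ≤ Nφ)
    (hLφ : L (fun x => (φ x : ℂ)) = fun x => (φ x : ℂ))
    (hdom : ∀ h : ℝ → ℂ, (∀ x, ‖h x‖ ≤ φ x) → ∀ x, ‖L h x‖ ≤ φ x)
    (g : ℝ → ℂ) (hg : ∀ x, ‖g x‖ ≤ 1)
    (G : ℕ → ℝ → ℂ)
    (hG : ∀ p, G p = fun x => (φ x : ℂ) * ∏ l ∈ Finset.range (p + 1), g (F^[l] x)) :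
    ∀ p : ℕ, eVariationOn (L^[p] (G p)) (Set.Icc 0 1) ≤
      ENNReal.ofReal (α ^ p) *
          eVariationOn (fun x => (φ x : ℂ) * g x) (Set.Icc 0 1) +
        (ENNReal.ofReal A + ENNReal.ofReal Nφ * eVariationOn g (Set.Icc 0 1)) /
          ENNReal.ofReal (1 - α) := by
  obtain ⟨hα0, hα1⟩ := hα
  set s : Set ℝ := Set.Icc 0 1 with hs
  set V0 : ℝ≥0∞ := eVariationOn (fun x => (φ x : ℂ) * g x) s with hV0
  set B : ℝ≥0∞ := ENNReal.ofReal A + ENNReal.ofReal Nφ * eVariationOn g s with hB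
  set c : ℝ≥0∞ := ENNReal.ofReal (1 - α) with hc
  have hc0 : c ≠ 0 := by
    simp only [hc, ne_eq, ENNReal.ofReal_eq_zero, not_le]; linarith
  have hct : c ≠ ⊤ := ENNReal.ofReal_ne_top
  have hNφ0 : (0:ℝ) ≤ Nφ := le_trans (hφ0 0) (hNφ 0)
  -- norm bounds on products
  have hprod : ∀ (n : ℕ) (x : ℝ), ‖∏ l ∈ Finset.range n, g (F^[l] x)‖ ≤ 1 := by
    intro n x
    calc ‖∏ l ∈ Finset.range n, g (F^[l] x)‖ ≤ ∏ l ∈ Finset.range n, ‖g (F^[l] x)‖ :=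
          Finset.norm_prod_le _ _
      _ ≤ 1 := Finset.prod_le_one (fun _ _ => norm_nonneg _) (fun _ _ => hg _)
  have hGφ : ∀ (p : ℕ) (x : ℝ), ‖G p x‖ ≤ φ x := by
    intro p x
    rw [hG p]
    simp only [norm_mul, Complex.norm_real, Real.norm_eq_abs, abs_of_nonneg (hφ0 x)]
    calc φ x * ‖∏ l ∈ Finset.range (p + 1), g (F^[l] x)‖ ≤ φ x * 1 := by
          have := hprod (p + 1) x
          exact mul_le_mul_of_nonneg_left this (hφ0 x)
      _ = φ x := mul_one _
  have hiter : ∀ (k : ℕ) (w : ℝ → ℂ), (∀ x, ‖w x‖ ≤ φ x) → ∀ x, ‖(L^[k] w) x‖ ≤ φ x := by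
    intro k
    induction k with
    | zero => intro w hw x; simpa using hw x
    | succ n ih =>
        intro w hw x
        rw [Function.iterate_succ_apply']
        exact hdom _ (ih w hw) x
  have hup : ∀ (p : ℕ) (x : ℝ), ‖(L^[p] (G p)) x‖ ≤ φ x := fun p => hiter p _ (hGφ p)
  -- shift identity
  have hshift : ∀ (j : ℕ) (w : ℝ → ℂ),
      L^[j] (fun x => g (F^[j] x) * w x) = fun x => g x * (L^[j] w) x := by
    intro j
    induction j with
    | zero => intro w; simp
    | succ n ih =>
        intro w
        have e1 : (fun x => g (F^[n + 1] x) * w x)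
            = (fun x => (fun y => g (F^[n] y)) (F x) * w x) := by
          funext x; rw [Function.iterate_succ_apply]
        rw [Function.iterate_succ_apply, e1, hcomp (fun y => g (F^[n] y)) w,
          ih (L w), Function.iterate_succ_apply]
  -- recursion
  have hrec : ∀ p : ℕ, L^[p + 1] (G (p + 1)) = fun x => g x * L (L^[p] (G p)) x := by
    intro p
    have e : G (p + 1) = fun x => g (F^[p + 1] x) * G p x := by
      funext x
      simp only [hG, Finset.prod_range_succ]
      ring
    rw [e, hshift (p + 1) (G p), Function.iterate_succ_apply']
  -- integrability of φ
  have hφint : IntegrableOn φ s := by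
    by_contra hI
    rw [MeasureTheory.integral_undef hI] at hφ1
    norm_num at hφ1
  have hint : ∀ p : ℕ, ENNReal.ofReal (∫ x in s, ‖(L^[p] (G p)) x‖) ≤ 1 := by
    intro p
    have h1 : ∫ x in s, ‖(L^[p] (G p)) x‖ ≤ 1 := by
      rw [← hφ1]
      exact integral_mono_of_nonneg (Filter.Eventually.of_forall fun x => norm_nonneg _)
        hφint (Filter.Eventually.of_forall fun x => hup p x)
    calc ENNReal.ofReal (∫ x in s, ‖(L^[p] (G p)) x‖) ≤ ENNReal.ofReal 1 :=
          ENNReal.ofReal_le_ofReal h1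
      _ = 1 := ENNReal.ofReal_one
  -- one-step inequality
  have hstep : ∀ p : ℕ,
      eVariationOn (L^[p + 1] (G (p + 1))) s ≤
        ENNReal.ofReal α * eVariationOn (L^[p] (G p)) s + B := by
    intro p
    rw [hrec p]
    have hLup : ∀ x, ‖L (L^[p] (G p)) x‖ ≤ φ x := hdom _ (hup p)
    have hmul : eVariationOn (fun x => g x * L (L^[p] (G p)) x) s ≤
        1 * eVariationOn (L (L^[p] (G p))) s + ENNReal.ofReal Nφ * eVariationOn g s := by
      refine evar_mul_le g (L (L^[p] (G p))) s 1 (ENNReal.ofReal Nφ) ?_ ?_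
      · intro x
        rw [← ENNReal.ofReal_coe_nnreal, ← ENNReal.ofReal_one]
        exact ENNReal.ofReal_le_ofReal (hg x)
      · intro x
        rw [← ENNReal.ofReal_coe_nnreal]
        exact ENNReal.ofReal_le_ofReal (le_trans (hLup x) (hNφ x))
    refine hmul.trans ?_
    rw [one_mul]
    have hly := hLY (L^[p] (G p))
    calc eVariationOn (L (L^[p] (G p))) s + ENNReal.ofReal Nφ * eVariationOn g s
        ≤ (ENNReal.ofReal α * eVariationOn (L^[p] (G p)) s +
            ENNReal.ofReal A * ENNReal.ofReal (∫ x in s, ‖(L^[p] (G p)) x‖)) +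
            ENNReal.ofReal Nφ * eVariationOn g s := by gcongr
      _ ≤ (ENNReal.ofReal α * eVariationOn (L^[p] (G p)) s + ENNReal.ofReal A * 1) +
            ENNReal.ofReal Nφ * eVariationOn g s := by gcongr; exact hint p
      _ = ENNReal.ofReal α * eVariationOn (L^[p] (G p)) s + B := by rw [hB, mul_one, add_assoc]
  -- arithmetic identity
  have harith : ENNReal.ofReal α * (B / c) + B = B / c := by
    have h2 : c * (B / c) = B := ENNReal.mul_div_cancel hc0 hct
    calc ENNReal.ofReal α * (B / c) + B
        = ENNReal.ofReal α * (B / c) + c * (B / c) := by rw [h2]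
      _ = (ENNReal.ofReal α + c) * (B / c) := by ring
      _ = 1 * (B / c) := by
          rw [hc, ← ENNReal.ofReal_add hα0.le (by linarith)]
          norm_num
      _ = B / c := one_mul _
  -- main induction
  intro p
  induction p with
  | zero =>
      have e : Set.EqOn (L^[0] (G 0)) (fun x => (φ x : ℂ) * g x) s := by
        intro x _
        simp only [Function.iterate_zero, id_eq, hG 0]
        simp
      rw [eVariationOn.eq_of_eqOn e]
      calc V0 = 1 * V0 := (one_mul _).symm
        _ = ENNReal.ofReal (α ^ 0) * V0 := by norm_num
        _ ≤ ENNReal.ofReal (α ^ 0) * V0 + B / c := le_self_add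
  | succ p ih =>
      calc eVariationOn (L^[p + 1] (G (p + 1))) s
          ≤ ENNReal.ofReal α * eVariationOn (L^[p] (G p)) s + B := hstep p
        _ ≤ ENNReal.ofReal α * (ENNReal.ofReal (α ^ p) * V0 + B / c) + B := by gcongr
        _ = ENNReal.ofReal α * ENNReal.ofReal (α ^ p) * V0 +
              (ENNReal.ofReal α * (B / c) + B) := by ring
        _ = ENNReal.ofReal (α ^ (p + 1)) * V0 + B / c := by
            rw [harith, ← ENNReal.ofReal_mul hα0.le, ← pow_succ']
end
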